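/- Let 0 < α < β < ∞ and let b̄ : ℝ → ℝ be continuous, nonnegative, with b̄(a) = 0 for a ∉ [α,β]; set r = ∫_α^β b̄(c) dc. Let B : [0,∞) → ℝ be nonnegative and satisfy B(t) = ∫_α^β b̄(c)·B(t−c) dc for all t ≥ β, and suppose c₁ ≤ B(s) ≤ c₂ for all s ∈ [0,β] with c₁ ≥ 0. Then for all t ≥ 0: if r ≥ 1 then B(t) ≥ c₁·r^{⌊t/β⌋}, and if r ≤ 1 then B(t) ≤ c₂·r^{⌊t/β⌋}. In particular the newborn density grows (or decays) asymptotically like r^{t/β}. -/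

import Mathlib

/-!
For `t ≥ β` the renewal equation writes `B t` as an average, of total weight `r`, of the
values of `B` on `[t - β, t - α]`, where `⌊· / β⌋` is at most one less than at `t`. Hence a
bound `g ⌊s / β⌋ ≤ B s` with `g` monotone and `g (k + 1) ≤ r * g k` spreads from `[0, β)` to
all `s ≥ 0` by induction in steps of `α > 0`. Taking `g k = c₁ * r ^ k` gives the growth
bound; applied to the solution `-B` with `g k = -(c₂ * r ^ k)` it gives the decay bound.
-/

open MeasureTheory Real Set

theorem forall_nonneg_of_step_induction {α : ℝ} (hα : 0 < α) {P : ℝ → Prop}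
    (h : ∀ t, 0 ≤ t → (∀ s, 0 ≤ s → s ≤ t - α → P s) → P t) : ∀ t, 0 ≤ t → P t := by
  suffices hn : ∀ n : ℕ, ∀ t, 0 ≤ t → t < n * α → P t by
    intro t ht
    obtain ⟨n, hn'⟩ := exists_nat_gt (t / α)
    exact hn n t ht ((div_lt_iff₀ hα).1 hn')
  intro n
  induction n with
  | zero =>
    intro t ht ht'
    simp only [Nat.cast_zero, zero_mul] at ht'
    linarith
  | succ n ih =>
    intro t ht ht'
    exact h t ht fun s hs hst => ih s hs (by push_cast at ht'; linarith)

theorem Int.toNat_floor_div_le_toNat_floor_sub_div_add_one {β c : ℝ} (hβ : 0 < β) (hc : c ≤ β)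
    (t : ℝ) : ⌊t / β⌋.toNat ≤ ⌊(t - c) / β⌋.toNat + 1 := by
  have : ⌊t / β⌋ - 1 ≤ ⌊(t - c) / β⌋ := by
    rw [← Int.floor_sub_one]
    refine Int.floor_mono ?_
    rw [sub_div]
    linarith [div_le_one_of_le₀ hc hβ.le]
  omega

theorem intervalIntegral.integral_mul_const_le_integral_mul {f g : ℝ → ℝ} {a b m : ℝ}
    (hab : a ≤ b) (hf : IntervalIntegrable f volume a b)
    (hfg : IntervalIntegrable (fun x => f x * g x) volume a b)
    (hf0 : ∀ x ∈ Icc a b, 0 ≤ f x) (hm : ∀ x ∈ Icc a b, m ≤ g x) :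
    (∫ x in a..b, f x) * m ≤ ∫ x in a..b, f x * g x := by
  rw [← intervalIntegral.integral_mul_const]
  exact intervalIntegral.integral_mono_on hab (hf.mul_const m) hfg
    fun x hx => mul_le_mul_of_nonneg_left (hm x hx) (hf0 x hx)

theorem intervalIntegrable_mul_comp_sub {bbar B : ℝ → ℝ} (hbc : Continuous bbar)
    (hB : ContinuousOn B (Ici 0)) {α β t : ℝ} (hαβ : α ≤ β) (ht : β ≤ t) :
    IntervalIntegrable (fun c => bbar c * B (t - c)) volume α β := by
  refine ContinuousOn.intervalIntegrable ?_
  rw [uIcc_of_le hαβ]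
  refine hbc.continuousOn.mul (hB.comp (continuous_const.sub continuous_id).continuousOn ?_)
  intro c hc
  simp only [mem_Ici, sub_nonneg]
  exact hc.2.trans ht

def IsRenewalSolution (α β : ℝ) (bbar B : ℝ → ℝ) : Prop :=
  ∀ t, β ≤ t → B t = ∫ c in α..β, bbar c * B (t - c)

namespace IsRenewalSolution

variable {α β : ℝ} {bbar B : ℝ → ℝ}

theorem neg (hB : IsRenewalSolution α β bbar B) : IsRenewalSolution α β bbar (-B) := by
  intro t ht
  simp only [Pi.neg_apply, mul_neg, intervalIntegral.integral_neg, hB t ht]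

theorem le_of_monotone (hB : IsRenewalSolution α β bbar B) (hα : 0 < α) (hαβ : α ≤ β)
    (hb0 : ∀ c ∈ Icc α β, 0 ≤ bbar c) (hbint : IntervalIntegrable bbar volume α β)
    (hBint : ∀ t, β ≤ t → IntervalIntegrable (fun c => bbar c * B (t - c)) volume α β)
    {g : ℕ → ℝ} (hg : Monotone g) (hgr : ∀ k, g (k + 1) ≤ (∫ c in α..β, bbar c) * g k)
    (hinit : ∀ s ∈ Ico 0 β, g 0 ≤ B s) : ∀ t, 0 ≤ t → g ⌊t / β⌋.toNat ≤ B t := by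
  have hβ : 0 < β := hα.trans_le hαβ
  refine forall_nonneg_of_step_induction hα fun t ht ih => ?_
  rcases lt_or_ge t β with htβ | htβ
  · have hk : ⌊t / β⌋.toNat = 0 := by
      rw [Int.floor_eq_zero_iff.2 ⟨div_nonneg ht hβ.le, (div_lt_one hβ).2 htβ⟩, Int.toNat_zero]
    rw [hk]
    exact hinit t ⟨ht, htβ⟩
  · set k := ⌊t / β⌋.toNat
    have hk1 : 1 ≤ k := by
      have : 1 ≤ ⌊t / β⌋ := Int.le_floor.2 (by simpa using (one_le_div hβ).2 htβ)
      omega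
    have hbelow : ∀ c ∈ Icc α β, g (k - 1) ≤ B (t - c) := fun c hc =>
      (hg (by have := Int.toNat_floor_div_le_toNat_floor_sub_div_add_one hβ hc.2 t; omega)).trans
        (ih (t - c) (by linarith [hc.2]) (by linarith [hc.1]))
    calc g k = g (k - 1 + 1) := by rw [Nat.sub_add_cancel hk1]
      _ ≤ (∫ c in α..β, bbar c) * g (k - 1) := hgr _
      _ ≤ ∫ c in α..β, bbar c * B (t - c) :=
        intervalIntegral.integral_mul_const_le_integral_mul hαβ hbint (hBint t htβ) hb0 hbelow
      _ = B t := (hB t htβ).symm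

end IsRenewalSolution

theorem renewal_geometric_bounds_general
    (α β : ℝ) (hα : 0 < α) (hαβ : α < β)
    (bbar : ℝ → ℝ) (hbc : Continuous bbar) (hb0 : ∀ a, 0 ≤ bbar a)
    (r : ℝ) (hr : r = ∫ c in α..β, bbar c)
    (B : ℝ → ℝ) (hBcont : ContinuousOn B (Set.Ici 0))
    (hB : ∀ t : ℝ, β ≤ t → B t = ∫ c in α..β, bbar c * B (t - c))
    (c₁ c₂ : ℝ) (hc₁ : 0 ≤ c₁)
    (hbound : ∀ s ∈ Set.Icc (0:ℝ) β, c₁ ≤ B s ∧ B s ≤ c₂) :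
    (1 ≤ r → ∀ t : ℝ, 0 ≤ t → c₁ * r ^ (⌊t / β⌋).toNat ≤ B t) ∧
    (r ≤ 1 → ∀ t : ℝ, 0 ≤ t → B t ≤ c₂ * r ^ (⌊t / β⌋).toNat) := by
  have hr0 : 0 ≤ r := hr ▸ intervalIntegral.integral_nonneg hαβ.le fun c _ => hb0 c
  have hc₂ : 0 ≤ c₂ := hc₁.trans <| (hbound 0 ⟨le_rfl, (hα.trans hαβ).le⟩).1.trans
    (hbound 0 ⟨le_rfl, (hα.trans hαβ).le⟩).2
  have hsol : IsRenewalSolution α β bbar B := hB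
  have hbint : IntervalIntegrable bbar volume α β := hbc.intervalIntegrable α β
  have hBint t ht := intervalIntegrable_mul_comp_sub hbc hBcont hαβ.le (t := t) ht
  subst hr
  refine ⟨fun hr1 t ht => ?_, fun hr1 t ht => ?_⟩
  · refine hsol.le_of_monotone hα hαβ.le (fun c _ => hb0 c) hbint hBint
      ((pow_right_mono₀ hr1).const_mul hc₁) (fun k => le_of_eq (by ring))
      (fun s hs => by simpa using (hbound s (Ico_subset_Icc_self hs)).1) t ht
  · have := hsol.neg.le_of_monotone hα hαβ.le (fun c _ => hb0 c) hbint
      (fun t ht => by simp only [Pi.neg_apply, mul_neg]; exact (hBint t ht).neg)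
      ((pow_right_anti₀ hr0 hr1).const_mul hc₂).neg (fun k => le_of_eq (by ring))
      (fun s hs => by simpa using (hbound s (Ico_subset_Icc_self hs)).2) t ht
    simpa using this

/-- geometric growth/decay bounds for the nonnegative solution of
the homogeneous renewal equation: if `c₁ ≤ B ≤ c₂` on `[0,β]` with `c₁ ≥ 0`,
then for all `t ≥ 0`, `B(t) ≥ c₁·r^⌊t/β⌋` when `r ≥ 1`, and
`B(t) ≤ c₂·r^⌊t/β⌋` when `r ≤ 1`; i.e. the newborn density grows (or decays)
asymptotically like `r^{t/β}`. -/
theorem renewal_geometric_bounds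
    (α β : ℝ) (hα : 0 < α) (hαβ : α < β)
    (bbar : ℝ → ℝ) (hbc : Continuous bbar) (hb0 : ∀ a, 0 ≤ bbar a)
    (hbsupp : ∀ a, a ∉ Set.Icc α β → bbar a = 0)
    (r : ℝ) (hr : r = ∫ c in α..β, bbar c)
    (B : ℝ → ℝ) (hBcont : ContinuousOn B (Set.Ici 0))
    (hBnonneg : ∀ t : ℝ, 0 ≤ t → 0 ≤ B t)
    (hB : ∀ t : ℝ, β ≤ t → B t = ∫ c in α..β, bbar c * B (t - c))
    (c₁ c₂ : ℝ) (hc₁ : 0 ≤ c₁)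
    (hbound : ∀ s ∈ Set.Icc (0:ℝ) β, c₁ ≤ B s ∧ B s ≤ c₂) :
    (1 ≤ r → ∀ t : ℝ, 0 ≤ t → c₁ * r ^ (⌊t / β⌋).toNat ≤ B t) ∧
    (r ≤ 1 → ∀ t : ℝ, 0 ≤ t → B t ≤ c₂ * r ^ (⌊t / β⌋).toNat) :=
  renewal_geometric_bounds_general α β hα hαβ bbar hbc hb0 r hr B hBcont hB c₁ c₂ hc₁ hbound
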